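/- Let q = (q₁,...,q₅) ∈ ℤ⁵ be admissible, and suppose q is not a permutation of (1,1,1,-1,-3). Then there exist pairwise distinct indices a,b,c,d ∈ {1,2,3,4,5} such that either both q_a + q_b > 0 and q_c + q_d > 0, or both q_a + q_b < 0 and q_c + q_d < 0. -/

import Mathlib

/-!
All the data are invariant under permuting coordinates, so we may sort `q` increasingly:
`x₀ ≤ x₁ ≤ x₂ ≤ x₃ ≤ x₄`, and then `x₂ > 0`. Unless `x₁ > 0` or `x₁ + x₄ > 0` (which give two
positive pair sums), every sum `xᵢ + xⱼ` with `i ≤ 1 < j` is `≤ 0`. If `x₀ + x₃` and `x₁ + x₂` are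
not both negative, one of them vanishes, and since `gcd 0 y = |y|` the gcd condition makes the
sums of the disjoint pairs equal to `±2`; this leaves only `x = (-3, -1, 1, 1, 1)`.
-/

open Finset

noncomputable section

/-- Admissibility of a 5-tuple of integers. -/
def Admissible (q : Fin 5 → ℤ) : Prop :=
  (∀ i, Odd (q i)) ∧
  (∀ σ : Equiv.Perm (Fin 5), Int.gcd (q (σ 0) + q (σ 1)) (q (σ 2) + q (σ 3)) = 2) ∧
  3 ≤ (Finset.univ.filter fun i => 0 < q i).card

open Function

def HasSameSignPairs {ι : Type*} (q : ι → ℤ) : Prop :=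
  ∃ a b c d : ι, a ≠ b ∧ a ≠ c ∧ a ≠ d ∧ b ≠ c ∧ b ≠ d ∧ c ≠ d ∧
    ((0 < q a + q b ∧ 0 < q c + q d) ∨ (q a + q b < 0 ∧ q c + q d < 0))

theorem HasSameSignPairs.of_comp {ι κ : Type*} {q : ι → ℤ} {f : κ → ι} (hf : Injective f)
    (h : HasSameSignPairs (q ∘ f)) : HasSameSignPairs q := by
  obtain ⟨a, b, c, d, hab, hac, had, hbc, hbd, hcd, hsign⟩ := h
  exact ⟨f a, f b, f c, f d, hf.ne hab, hf.ne hac, hf.ne had, hf.ne hbc, hf.ne hbd, hf.ne hcd,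
    hsign⟩

theorem exists_perm_eq_of_exists_perm_comp {ι α : Type*} {q v : ι → α} (σ : Equiv.Perm ι)
    (h : ∃ τ : Equiv.Perm ι, ∀ i, q (σ i) = v (τ i)) :
    ∃ τ : Equiv.Perm ι, ∀ i, q i = v (τ i) := by
  obtain ⟨τ, hτ⟩ := h
  exact ⟨σ⁻¹.trans τ, fun i => by simpa using hτ (σ⁻¹ i)⟩

theorem card_filter_lt_le_card_Ioi {ι α : Type*} [LinearOrder ι] [Fintype ι]
    [LocallyFiniteOrderTop ι] [LinearOrder α] {x : ι → α} (hx : Monotone x) {a : α} {i : ι}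
    (hi : x i ≤ a) : #{j | a < x j} ≤ #(Ioi i) := by
  refine card_le_card fun j hj => mem_Ioi.mpr (lt_of_not_ge fun hji => ?_)
  exact (mem_filter.mp hj).2.not_ge ((hx hji).trans hi)

theorem Admissible.comp_perm {q : Fin 5 → ℤ} (hq : Admissible q) (σ : Equiv.Perm (Fin 5)) :
    Admissible (q ∘ σ) := by
  obtain ⟨hodd, hgcd, hpos⟩ := hq
  refine ⟨fun i => hodd (σ i), fun τ => hgcd (σ * τ), hpos.trans_eq ?_⟩
  exact (card_equiv σ fun i => by simp).symm

theorem Admissible.natAbs_eq_two_of_add_eq_zero {x : Fin 5 → ℤ} (hx : Admissible x)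
    (v : Fin 5 → Fin 5) (hv : Bijective v) (h : x (v 0) + x (v 1) = 0) :
    (x (v 2) + x (v 3)).natAbs = 2 := by
  simpa [h] using hx.2.1 (Equiv.ofBijective v hv)

theorem Admissible.pos_two_of_monotone {x : Fin 5 → ℤ} (hx : Admissible x) (hmono : Monotone x) :
    0 < x 2 := by
  by_contra! h
  have hle := card_filter_lt_le_card_Ioi hmono h
  rw [Fin.card_Ioi] at hle
  exact absurd hx.2.2 (by omega)

theorem Admissible.hasSameSignPairs_of_monotone {x : Fin 5 → ℤ} (hx : Admissible x)
    (hmono : Monotone x) (hne : ¬ ∃ σ : Equiv.Perm (Fin 5), ∀ i, x i = ![1, 1, 1, -1, -3] (σ i)) :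
    HasSameSignPairs x := by
  have h01 := hmono (show (0 : Fin 5) ≤ 1 by decide)
  have h12 := hmono (show (1 : Fin 5) ≤ 2 by decide)
  have h23 := hmono (show (2 : Fin 5) ≤ 3 by decide)
  have h34 := hmono (show (3 : Fin 5) ≤ 4 by decide)
  have h2 := hx.pos_two_of_monotone hmono
  have h1 : x 1 ≠ 0 := fun h => by simpa [h] using hx.1 1
  by_cases hp1 : 0 < x 1
  · exact ⟨1, 2, 3, 4, by decide, by decide, by decide, by decide, by decide, by decide,
      .inl ⟨by omega, by omega⟩⟩
  by_cases hp14 : 0 < x 1 + x 4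
  · exact ⟨2, 3, 1, 4, by decide, by decide, by decide, by decide, by decide, by decide,
      .inl ⟨by omega, hp14⟩⟩
  by_cases hn : x 0 + x 3 < 0 ∧ x 1 + x 2 < 0
  · exact ⟨0, 3, 1, 2, by decide, by decide, by decide, by decide, by decide, by decide, .inr hn⟩
  exfalso
  rcases (show x 1 + x 2 = 0 ∨ x 0 + x 3 = 0 by omega) with h | h
  · have hs34 := hx.natAbs_eq_two_of_add_eq_zero ![1, 2, 3, 4, 0] (by decide) h
    have hs03 := hx.natAbs_eq_two_of_add_eq_zero ![1, 2, 0, 3, 4] (by decide) h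
    simp only [Matrix.cons_val] at hs34 hs03
    refine hne ⟨Fin.revPerm, fun i => ?_⟩
    fin_cases i <;>
      simp only [Fin.zero_eta, Fin.mk_one, Fin.reduceFinMk, Fin.revPerm_apply, Fin.rev_zero,
        Fin.reduceLast, Fin.reduceRev, Matrix.cons_val] <;> omega
  · have hs12 := hx.natAbs_eq_two_of_add_eq_zero ![0, 3, 1, 2, 4] (by decide) h
    have hs14 := hx.natAbs_eq_two_of_add_eq_zero ![0, 3, 1, 4, 2] (by decide) h
    simp only [Matrix.cons_val] at hs12 hs14
    omega

theorem stmt0 (q : Fin 5 → ℤ) (hq : Admissible q)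
    (hnp : ¬ ∃ σ : Equiv.Perm (Fin 5), ∀ i, q i = ![1, 1, 1, -1, -3] (σ i)) :
    ∃ a b c d : Fin 5, a ≠ b ∧ a ≠ c ∧ a ≠ d ∧ b ≠ c ∧ b ≠ d ∧ c ≠ d ∧
      ((0 < q a + q b ∧ 0 < q c + q d) ∨ (q a + q b < 0 ∧ q c + q d < 0)) := by
  refine HasSameSignPairs.of_comp (Tuple.sort q).injective ?_
  exact (hq.comp_perm _).hasSameSignPairs_of_monotone (Tuple.monotone_sort q)
    fun h => hnp (exists_perm_eq_of_exists_perm_comp _ h)
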